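/- arXiv:1803.01332 — 3 statements merged into one kernel-verified Lean document; each statement's English description precedes it below -/
import Mathlib

section
/- Let X be a normal Hausdorff space. Then C(X), the set of graphs of continuous real-valued functions on X, is dense in L₀(X) with the Vietoris topology τ_V, and consequently also dense in (MC(X), τ_V). -/
open Set Topology TopologicalSpace

/-- The set of values of a set-valued map (identified with its graph) at a point. -/
def valuesAt {X : Type*} (F : Set (X × ℝ)) (x : X) : Set ℝ := {y | (x, y) ∈ F}

/-- A set-valued map (identified with its graph) is cusco: upper semicontinuous at every
point, with nonempty compact convex values. -/
def IsCusco {X : Type*} [TopologicalSpace X] (F : Set (X × ℝ)) : Prop :=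
  (∀ x : X, ∀ V : Set ℝ, IsOpen V → valuesAt F x ⊆ V →
    ∃ U : Set X, IsOpen U ∧ x ∈ U ∧ ∀ u ∈ U, valuesAt F u ⊆ V) ∧
  (∀ x : X, (valuesAt F x).Nonempty ∧ IsCompact (valuesAt F x) ∧ Convex ℝ (valuesAt F x))

/-- A minimal cusco map, i.e. a cusco map containing no proper cusco submap. -/
def IsMinimalCusco {X : Type*} [TopologicalSpace X] (F : Set (X × ℝ)) : Prop :=
  IsCusco F ∧ ∀ G : Set (X × ℝ), IsCusco G → G ⊆ F → G = F

/-- `L(X)`: all cusco maps from `X` to `ℝ`. -/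
def LSet (X : Type*) [TopologicalSpace X] : Set (Set (X × ℝ)) := {F | IsCusco F}

/-- `L₀(X)`: cusco maps that are single-valued at each isolated point. -/
def L0Set (X : Type*) [TopologicalSpace X] : Set (Set (X × ℝ)) :=
  {F | IsCusco F ∧ ∀ x : X, IsOpen ({x} : Set X) → ∃ y : ℝ, valuesAt F x = {y}}

/-- `MC(X)`: all minimal cusco maps from `X` to `ℝ`. -/
def MCSet (X : Type*) [TopologicalSpace X] : Set (Set (X × ℝ)) := {F | IsMinimalCusco F}

/-- The upper Vietoris topology on a family of subsets of `X × ℝ`. -/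
def upperVietoris {X : Type*} [TopologicalSpace X] (S : Set (Set (X × ℝ))) :
    TopologicalSpace S :=
  .generateFrom {U | ∃ W : Set (X × ℝ), IsOpen W ∧ U = {A : S | (A : Set (X × ℝ)) ⊆ W}}

/-- The Vietoris topology on a family of subsets of `X × ℝ`. -/
def vietoris {X : Type*} [TopologicalSpace X] (S : Set (Set (X × ℝ))) :
    TopologicalSpace S :=
  .generateFrom
    ({U | ∃ W : Set (X × ℝ), IsOpen W ∧ U = {A : S | (A : Set (X × ℝ)) ⊆ W}} ∪
     {U | ∃ W : Set (X × ℝ), IsOpen W ∧ U = {A : S | ((A : Set (X × ℝ)) ∩ W).Nonempty}})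

/-- The graph of a function `X → ℝ`. -/
def graphOf {X : Type*} (f : X → ℝ) : Set (X × ℝ) := {p | p.2 = f p.1}

/-- `X` is countably compact: every countable open cover has a finite subcover. -/
def CountablyCompact (X : Type*) [TopologicalSpace X] : Prop :=
  ∀ U : ℕ → Set X, (∀ n, IsOpen (U n)) → (⋃ n, U n) = Set.univ →
    ∃ t : Finset ℕ, (⋃ n ∈ t, U n) = Set.univ


/-!
Let `F ∈ L₀(X)` lie in a basic Vietoris set `W⁺ ∩ V₁⁻ ∩ ⋯ ∩ Vₙ⁻`. The open boxes `U × V ⊆ W`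
with `V` an interval containing `F(u)` for all `u ∈ U` cover `F`; their union `Ω` is open with
interval sections. After squashing `ℝ` onto `(-1, 1)`, the lower ends of these sections form an
upper semicontinuous function below the lower envelope of `F` (which is lower semicontinuous),
and symmetrically above; the Katětov–Tong insertion theorem, proved by the Tietze iteration,
gives continuous functions in both gaps, and their mean is a continuous function with graph in
`Ω`. Urysohn bumps then move it, one point at a time and without leaving `Ω`, through a point of
each `Vᵢ`: a point of `F ∩ Vᵢ`, or a fresh nearby point of `Ω ∩ Vᵢ` when that abscissa is already
used, which can only be needed at a non-isolated abscissa because `F` is single-valued at isolated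
points. Minimal cusco maps are single-valued at isolated points as well.
-/

open Filter
section Insertion

variable {X : Type*} [TopologicalSpace X] [NormalSpace X]

lemma exists_continuous_abs_le_third {g h : X → ℝ} (hg : UpperSemicontinuous g)
    (hh : LowerSemicontinuous h) (hgh : g ≤ h) {c : ℝ} (hc : 0 < c) (hgc : ∀ x, g x ≤ c)
    (hhc : ∀ x, -c ≤ h x) :
    ∃ u : X → ℝ, Continuous u ∧
      ∀ x, |u x| ≤ c / 3 ∧ g x - 2 * c / 3 ≤ u x ∧ u x ≤ h x + 2 * c / 3 := by
  have hdisj : Disjoint (h ⁻¹' Iic (-(c / 3))) (g ⁻¹' Ici (c / 3)) :=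
    disjoint_left.2 fun x hxh hxg => by
      simp only [mem_preimage, mem_Iic, mem_Ici] at hxh hxg
      linarith [hgh x]
  obtain ⟨φ, hφ0, hφ1, hφ⟩ := exists_continuous_zero_one_of_isClosed
    (hh.isClosed_preimage _) (hg.isClosed_preimage _) hdisj
  refine ⟨fun x => c / 3 * (2 * φ x - 1), by fun_prop, fun x => ?_⟩
  dsimp only
  obtain ⟨hφx0, hφx1⟩ := hφ x
  refine ⟨abs_le.2 ⟨by nlinarith, by nlinarith⟩, ?_, ?_⟩
  · by_cases hx : c / 3 ≤ g x
    · rw [hφ1 hx, Pi.one_apply]; linarith [hgc x]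
    · nlinarith
  · by_cases hx : h x ≤ -(c / 3)
    · rw [hφ0 hx, Pi.zero_apply]; linarith [hhc x]
    · nlinarith

lemma exists_continuous_refine {g h s : X → ℝ} (hg : UpperSemicontinuous g)
    (hh : LowerSemicontinuous h) (hgh : g ≤ h) (hs : Continuous s) {c : ℝ} (hc : 0 < c)
    (hgs : ∀ x, g x - c ≤ s x ∧ s x ≤ h x + c) :
    ∃ s' : X → ℝ, Continuous s' ∧ (∀ x, g x - 2 * c / 3 ≤ s' x ∧ s' x ≤ h x + 2 * c / 3) ∧
      ∀ x, |s' x - s x| ≤ c / 3 := by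
  obtain ⟨u, hu, hub⟩ := exists_continuous_abs_le_third
    (hg.add hs.neg.upperSemicontinuous) (hh.add hs.neg.lowerSemicontinuous)
    (fun x => by simp only [Pi.neg_apply]; linarith [hgh x]) hc
    (fun x => by simp only [Pi.neg_apply]; linarith [(hgs x).1])
    (fun x => by simp only [Pi.neg_apply]; linarith [(hgs x).2])
  refine ⟨s + u, hs.add hu, fun x => ?_, fun x => by simpa using (hub x).1⟩
  obtain ⟨-, hlo, hhi⟩ := hub x
  simp only [Pi.neg_apply, Pi.add_apply] at hlo hhi ⊢
  constructor <;> linarith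

theorem exists_continuous_le_le_of_semicontinuous {g h : X → ℝ} (hg : UpperSemicontinuous g)
    (hh : LowerSemicontinuous h) (hgh : g ≤ h) (hg1 : ∀ x, g x ≤ 1) (hh1 : ∀ x, -1 ≤ h x) :
    ∃ f : X → ℝ, Continuous f ∧ ∀ x, g x ≤ f x ∧ f x ≤ h x := by
  let Approx (n : ℕ) (s : X → ℝ) : Prop :=
    Continuous s ∧ ∀ x, g x - (2 / 3) ^ n ≤ s x ∧ s x ≤ h x + (2 / 3) ^ n
  have step : ∀ n s, ∃ s' : X → ℝ,
      Approx n s → Approx (n + 1) s' ∧ ∀ x, |s' x - s x| ≤ (2 / 3) ^ n / 3 := by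
    intro n s
    by_cases hs : Approx n s
    · obtain ⟨s', hs', hgs', hss'⟩ := exists_continuous_refine hg hh hgh hs.1
        (pow_pos (by norm_num) n) hs.2
      refine ⟨s', fun _ => ⟨⟨hs', fun x => ?_⟩, hss'⟩⟩
      rw [pow_succ, mul_div_assoc', mul_comm]
      exact hgs' x
    · exact ⟨s, fun hs' => (hs hs').elim⟩
  choose next hnext using step
  let s : ℕ → X → ℝ := fun n => Nat.rec (fun _ => 0) (fun k sk => next k sk) n
  have hs : ∀ n, Approx n (s n) := by
    intro n
    induction n with
    | zero =>
      refine ⟨continuous_const, fun x => ?_⟩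
      change g x - (2 / 3) ^ 0 ≤ 0 ∧ 0 ≤ h x + (2 / 3) ^ 0
      constructor <;> linarith [hg1 x, hh1 x, pow_zero (2 / 3 : ℝ)]
    | succ n ih => exact (hnext n (s n) ih).1
  have hdist : ∀ n x, ‖s (n + 1) x - s n x‖ ≤ (2 / 3) ^ n / 3 :=
    fun n x => (hnext n (s n) (hs n)).2 x
  have hsum : Summable fun n : ℕ => (2 / 3 : ℝ) ^ n / 3 :=
    (summable_geometric_of_lt_one (by norm_num) (by norm_num)).div_const 3
  refine ⟨fun x => ∑' n, (s (n + 1) x - s n x),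
    continuous_tsum (fun n => (hs (n + 1)).1.sub (hs n).1) hsum hdist, fun x => ?_⟩
  have hlim : Tendsto (fun n => s n x) atTop (𝓝 (∑' n, (s (n + 1) x - s n x))) := by
    convert (hsum.of_norm_bounded (hdist · x)).hasSum.tendsto_sum_nat using 2 with n
    rw [Finset.sum_range_sub (fun k => s k x)]
    exact (sub_zero _).symm
  have hpow : Tendsto (fun n : ℕ => (2 / 3 : ℝ) ^ n) atTop (𝓝 0) :=
    tendsto_pow_atTop_nhds_zero_of_lt_one (by norm_num) (by norm_num)
  constructor
  · exact le_of_tendsto_of_tendsto' (by simpa using tendsto_const_nhds.sub hpow) hlim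
      fun n => by linarith [((hs n).2 x).1]
  · exact le_of_tendsto_of_tendsto' hlim (by simpa using tendsto_const_nhds.add hpow)
      fun n => ((hs n).2 x).2

end Insertion

section Squash

noncomputable def squash (y : ℝ) : ℝ := orderIsoIooNegOneOne ℝ y

lemma squash_strictMono : StrictMono squash :=
  fun _ _ hab => (orderIsoIooNegOneOne ℝ).strictMono hab

lemma continuous_squash : Continuous squash :=
  continuous_subtype_val.comp (orderIsoIooNegOneOne ℝ).continuous

lemma squash_mem_Ioo (y : ℝ) : squash y ∈ Ioo (-1) 1 := (orderIsoIooNegOneOne ℝ y).2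

lemma exists_continuous_squash_eq {X : Type*} [TopologicalSpace X] {c : X → ℝ}
    (hc : Continuous c) (hc1 : ∀ x, c x ∈ Ioo (-1) 1) :
    ∃ f : X → ℝ, Continuous f ∧ ∀ x, squash (f x) = c x :=
  ⟨fun x => (orderIsoIooNegOneOne ℝ).symm ⟨c x, hc1 x⟩,
    (orderIsoIooNegOneOne ℝ).symm.continuous.comp (hc.subtype_mk _), fun x => by simp [squash]⟩

end Squash

section Region

variable {X : Type*} {Ω : Set (X × ℝ)}

-- The ends of the sections of `Ω`, read through `squash` so that unbounded sections are allowed.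
noncomputable def squashInf (Ω : Set (X × ℝ)) (x : X) : ℝ := sInf (squash '' valuesAt Ω x)

noncomputable def squashSup (Ω : Set (X × ℝ)) (x : X) : ℝ := sSup (squash '' valuesAt Ω x)

lemma bddBelow_image_squash (s : Set ℝ) : BddBelow (squash '' s) :=
  ⟨-1, by rintro _ ⟨y, -, rfl⟩; exact (squash_mem_Ioo y).1.le⟩

lemma bddAbove_image_squash (s : Set ℝ) : BddAbove (squash '' s) :=
  ⟨1, by rintro _ ⟨y, -, rfl⟩; exact (squash_mem_Ioo y).2.le⟩

lemma neg_one_le_squashInf {x : X} (hx : (valuesAt Ω x).Nonempty) : -1 ≤ squashInf Ω x :=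
  le_csInf (hx.image _) (by rintro _ ⟨y, -, rfl⟩; exact (squash_mem_Ioo y).1.le)

lemma squashSup_le_one {x : X} (hx : (valuesAt Ω x).Nonempty) : squashSup Ω x ≤ 1 :=
  csSup_le (hx.image _) (by rintro _ ⟨y, -, rfl⟩; exact (squash_mem_Ioo y).2.le)

lemma mem_of_squashInf_lt_of_lt_squashSup (hconv : ∀ x, Convex ℝ (valuesAt Ω x)) {x : X}
    {y : ℝ} (hx : (valuesAt Ω x).Nonempty) (h₁ : squashInf Ω x < squash y)
    (h₂ : squash y < squashSup Ω x) : (x, y) ∈ Ω := by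
  obtain ⟨_, ⟨y₁, hy₁, rfl⟩, hy₁y⟩ := exists_lt_of_csInf_lt (hx.image _) h₁
  obtain ⟨_, ⟨y₂, hy₂, rfl⟩, hyy₂⟩ := exists_lt_of_lt_csSup (hx.image _) h₂
  exact (hconv x).ordConnected.out hy₁ hy₂
    ⟨(squash_strictMono.lt_iff_lt.1 hy₁y).le, (squash_strictMono.lt_iff_lt.1 hyy₂).le⟩

variable [TopologicalSpace X]

lemma isOpen_valuesAt (hΩ : IsOpen Ω) (x : X) : IsOpen (valuesAt Ω x) :=
  hΩ.preimage (Continuous.prodMk_right x)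

lemma squashInf_lt (hΩ : IsOpen Ω) {x : X} {y : ℝ} (hxy : (x, y) ∈ Ω) :
    squashInf Ω x < squash y := by
  obtain ⟨y', hy'y, hy'⟩ := Filter.Eventually.exists_lt ((isOpen_valuesAt hΩ x).mem_nhds hxy)
  exact (csInf_le (bddBelow_image_squash _) ⟨y', hy', rfl⟩).trans_lt (squash_strictMono hy'y)

lemma lt_squashSup (hΩ : IsOpen Ω) {x : X} {y : ℝ} (hxy : (x, y) ∈ Ω) :
    squash y < squashSup Ω x := by
  obtain ⟨y', hyy', hy'⟩ := Filter.Eventually.exists_gt ((isOpen_valuesAt hΩ x).mem_nhds hxy)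
  exact (squash_strictMono hyy').trans_le (le_csSup (bddAbove_image_squash _) ⟨y', hy', rfl⟩)

lemma upperSemicontinuous_squashInf (hΩ : IsOpen Ω) (hne : ∀ x, (valuesAt Ω x).Nonempty) :
    UpperSemicontinuous (squashInf Ω) := by
  intro x c hc
  obtain ⟨_, ⟨y, hy, rfl⟩, hyc⟩ := exists_lt_of_csInf_lt ((hne x).image _) hc
  filter_upwards [(hΩ.preimage (continuous_id.prodMk continuous_const)).mem_nhds hy]
    with x' hx' using (csInf_le (bddBelow_image_squash _) ⟨y, hx', rfl⟩).trans_lt hyc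

lemma lowerSemicontinuous_squashSup (hΩ : IsOpen Ω) (hne : ∀ x, (valuesAt Ω x).Nonempty) :
    LowerSemicontinuous (squashSup Ω) := by
  intro x c hc
  obtain ⟨_, ⟨y, hy, rfl⟩, hyc⟩ := exists_lt_of_lt_csSup ((hne x).image _) hc
  filter_upwards [(hΩ.preimage (continuous_id.prodMk continuous_const)).mem_nhds hy]
    with x' hx' using hyc.trans_le (le_csSup (bddAbove_image_squash _) ⟨y, hx', rfl⟩)

theorem exists_continuous_graph_subset [NormalSpace X] (hΩ : IsOpen Ω)
    (hconv : ∀ x, Convex ℝ (valuesAt Ω x)) {l u : X → ℝ} (hl : LowerSemicontinuous l)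
    (hu : UpperSemicontinuous u) (hlΩ : ∀ x, (x, l x) ∈ Ω) (huΩ : ∀ x, (x, u x) ∈ Ω) :
    ∃ f : X → ℝ, Continuous f ∧ ∀ x, (x, f x) ∈ Ω := by
  have hne : ∀ x, (valuesAt Ω x).Nonempty := fun x => ⟨l x, hlΩ x⟩
  obtain ⟨φ, hφ, hφb⟩ := exists_continuous_le_le_of_semicontinuous
    (upperSemicontinuous_squashInf hΩ hne)
    (continuous_squash.comp_lowerSemicontinuous hl squash_strictMono.monotone)
    (fun x => (squashInf_lt hΩ (hlΩ x)).le)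
    (fun x => ((squashInf_lt hΩ (hlΩ x)).trans (squash_mem_Ioo _).2).le)
    (fun x => (squash_mem_Ioo _).1.le)
  obtain ⟨ψ, hψ, hψb⟩ := exists_continuous_le_le_of_semicontinuous
    (continuous_squash.comp_upperSemicontinuous hu squash_strictMono.monotone)
    (lowerSemicontinuous_squashSup hΩ hne)
    (fun x => (lt_squashSup hΩ (huΩ x)).le)
    (fun x => (squash_mem_Ioo _).2.le)
    (fun x => ((squash_mem_Ioo _).1.trans (lt_squashSup hΩ (huΩ x))).le)
  -- `φ` is squeezed below `squash ∘ l` and `ψ` above `squash ∘ u`; so their mean is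
  -- strictly between the two boundaries, although each of them may touch one.
  have hmean : ∀ x, squashInf Ω x < (φ x + ψ x) / 2 ∧ (φ x + ψ x) / 2 < squashSup Ω x := by
    intro x
    have := squashInf_lt hΩ (hlΩ x)
    have := lt_squashSup hΩ (hlΩ x)
    have := squashInf_lt hΩ (huΩ x)
    have := lt_squashSup hΩ (huΩ x)
    simp only [Function.comp_apply] at hφb hψb
    constructor <;> linarith [hφb x, hψb x]
  obtain ⟨f, hf, hfc⟩ := exists_continuous_squash_eq (c := fun x => (φ x + ψ x) / 2)
    (by fun_prop) fun x => ⟨(neg_one_le_squashInf (hne x)).trans_lt (hmean x).1,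
      (hmean x).2.trans_le (squashSup_le_one (hne x))⟩
  exact ⟨f, hf, fun x => mem_of_squashInf_lt_of_lt_squashSup hconv (hne x)
    ((hfc x).symm ▸ (hmean x).1) ((hfc x).symm ▸ (hmean x).2)⟩

end Region

section Interpolation

variable {X : Type*} [TopologicalSpace X] [T1Space X] {Ω : Set (X × ℝ)}

lemma exists_notMem_finset_of_not_isOpen_singleton {x : X} (hx : ¬IsOpen ({x} : Set X))
    {N : Set X} (hN : N ∈ 𝓝 x) (S : Finset X) : ∃ z ∈ N, z ∉ S :=
  haveI : (𝓝[≠] x).NeBot := ⟨fun h => hx ((isOpen_singleton_iff_punctured_nhds x).2 h)⟩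
  (infinite_of_mem_nhds x hN).exists_notMem_finset S

lemma exists_mem_or_exists_fresh (hΩ : IsOpen Ω) {V F : Set (X × ℝ)} (hV : IsOpen V)
    (hFΩ : F ⊆ Ω) (hF : ∀ x, IsOpen ({x} : Set X) → (valuesAt F x).Subsingleton) {p : X × ℝ}
    (hpF : p ∈ F) (hpV : p ∈ V) {A S : Finset X} (hpA : p.1 ∈ A) {f : X → ℝ}
    (hfF : ∀ x ∈ S, x ∈ A → (x, f x) ∈ F) :
    (∃ x ∈ S, (x, f x) ∈ V) ∨ ∃ q ∈ Ω ∩ V, q.1 ∉ S ∧ (q.1 ∈ A → q ∈ F) := by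
  classical
  obtain ⟨x, y⟩ := p
  by_cases hxS : x ∈ S
  · by_cases hx : IsOpen ({x} : Set X)
    · exact .inl ⟨x, hxS, hF x hx (hfF x hxS hpA) hpF ▸ hpV⟩
    · have hN : {z | (z, y) ∈ Ω ∩ V} ∈ 𝓝 x :=
        ((hΩ.inter hV).preimage (continuous_id.prodMk continuous_const)).mem_nhds ⟨hFΩ hpF, hpV⟩
      obtain ⟨z, hz, hzSA⟩ := exists_notMem_finset_of_not_isOpen_singleton hx hN (S ∪ A)
      rw [Finset.mem_union, not_or] at hzSA
      exact .inr ⟨(z, y), hz, hzSA.1, fun h => (hzSA.2 h).elim⟩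
  · exact .inr ⟨(x, y), ⟨hFΩ hpF, hpV⟩, hxS, fun _ => hpF⟩

variable [NormalSpace X]

lemma exists_continuous_update (hΩ : IsOpen Ω) (hconv : ∀ x, Convex ℝ (valuesAt Ω x))
    {f : X → ℝ} (hf : Continuous f) (hfΩ : ∀ x, (x, f x) ∈ Ω) {p : X × ℝ} (hp : p ∈ Ω)
    {S : Finset X} (hpS : p.1 ∉ S) :
    ∃ f' : X → ℝ, Continuous f' ∧ (∀ x, (x, f' x) ∈ Ω) ∧ f' p.1 = p.2 ∧ ∀ x ∈ S, f' x = f x := by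
  set δ := p.2 - f p.1
  set O := {x | (x, f x + δ) ∈ Ω} \ S
  have hO : IsOpen O :=
    (hΩ.preimage (continuous_id.prodMk (hf.add continuous_const))).sdiff S.finite_toSet.isClosed
  have hpO : p.1 ∈ O := ⟨by simpa [δ] using hp, hpS⟩
  obtain ⟨φ, hφ0, hφ1, hφ⟩ := exists_continuous_zero_one_of_isClosed hO.isClosed_compl
    isClosed_singleton (disjoint_singleton_right.2 (not_not.2 hpO))
  refine ⟨fun x => f x + φ x * δ, by fun_prop, fun x => ?_, by simp [hφ1 rfl, δ],
    fun x hx => by simp [hφ0 fun h => h.2 hx]⟩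
  by_cases hx : x ∈ O
  · exact (hconv x).add_smul_mem (hfΩ x) hx.1 (hφ x)
  · simpa [hφ0 hx] using hfΩ x

theorem exists_continuous_graph_meets (hΩ : IsOpen Ω) (hconv : ∀ x, Convex ℝ (valuesAt Ω x))
    {F : Set (X × ℝ)} (hFΩ : F ⊆ Ω) (hF : ∀ x, IsOpen ({x} : Set X) → (valuesAt F x).Subsingleton)
    {f : X → ℝ} (hf : Continuous f) (hfΩ : ∀ x, (x, f x) ∈ Ω) (𝒱 : Finset (Set (X × ℝ)))
    (h𝒱 : ∀ V ∈ 𝒱, IsOpen V ∧ (F ∩ V).Nonempty) :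
    ∃ f' : X → ℝ, Continuous f' ∧ (∀ x, (x, f' x) ∈ Ω) ∧ ∀ V ∈ 𝒱, ∃ x, (x, f' x) ∈ V := by
  classical
  choose w hw using fun V : 𝒱 => (h𝒱 V V.2).2
  set A := Finset.univ.image fun V : 𝒱 => (w V).1
  -- `f'` is pinned on `S`; over the abscissae `A` of the witnesses it must stay inside `F`, so
  -- that at an isolated abscissa, where `F` is single-valued, no two witnesses conflict.
  suffices key : ∀ 𝒰 ⊆ 𝒱, ∃ (f' : X → ℝ) (S : Finset X), Continuous f' ∧
      (∀ x, (x, f' x) ∈ Ω) ∧ (∀ x ∈ S, x ∈ A → (x, f' x) ∈ F) ∧ ∀ V ∈ 𝒰, ∃ x ∈ S, (x, f' x) ∈ V by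
    obtain ⟨f', S, hf', hf'Ω, -, hf'V⟩ := key 𝒱 subset_rfl
    exact ⟨f', hf', hf'Ω, fun V hV => (hf'V V hV).imp fun x hx => hx.2⟩
  intro 𝒰 h𝒰
  induction 𝒰 using Finset.induction_on with
  | empty => exact ⟨f, ∅, hf, hfΩ, by simp, by simp⟩
  | insert V 𝒰 _ ih =>
    obtain ⟨f', S, hf', hf'Ω, hf'F, hf'V⟩ := ih ((Finset.subset_insert V 𝒰).trans h𝒰)
    have hV : V ∈ 𝒱 := h𝒰 (Finset.mem_insert_self V 𝒰)
    obtain ⟨hVo, -⟩ := h𝒱 V hV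
    obtain ⟨hwF, hwV⟩ := hw ⟨V, hV⟩
    have hwA : (w ⟨V, hV⟩).1 ∈ A := Finset.mem_image_of_mem _ (Finset.mem_univ _)
    rcases exists_mem_or_exists_fresh hΩ hVo hFΩ hF hwF hwV hwA hf'F with hxV | ⟨q, ⟨hqΩ, hqV⟩, hqS, hqF⟩
    · refine ⟨f', S, hf', hf'Ω, hf'F, fun U hU => ?_⟩
      rcases Finset.mem_insert.1 hU with rfl | hU
      exacts [hxV, hf'V U hU]
    · obtain ⟨f'', hf'', hf''Ω, hf''q, hf''S⟩ := exists_continuous_update hΩ hconv hf' hf'Ω hqΩ hqS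
      refine ⟨f'', insert q.1 S, hf'', hf''Ω, fun x hx hxA => ?_, fun U hU => ?_⟩
      · rcases Finset.mem_insert.1 hx with rfl | hx
        · exact hf''q ▸ hqF hxA
        · exact hf''S x hx ▸ hf'F x hx hxA
      · rcases Finset.mem_insert.1 hU with rfl | hU
        · exact ⟨q.1, Finset.mem_insert_self _ _, hf''q ▸ hqV⟩
        · obtain ⟨x, hx, hxU⟩ := hf'V U hU
          exact ⟨x, Finset.mem_insert_of_mem hx, hf''S x hx ▸ hxU⟩

end Interpolation

section Cusco

variable {X : Type*}

lemma valuesAt_graphOf (f : X → ℝ) (x : X) : valuesAt (graphOf f) x = {f x} := rfl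

variable [TopologicalSpace X] {F : Set (X × ℝ)}

lemma IsCusco.sInf_mem (hF : IsCusco F) (x : X) : (x, sInf (valuesAt F x)) ∈ F :=
  (hF.2 x).2.1.sInf_mem (hF.2 x).1

lemma IsCusco.sSup_mem (hF : IsCusco F) (x : X) : (x, sSup (valuesAt F x)) ∈ F :=
  (hF.2 x).2.1.sSup_mem (hF.2 x).1

lemma IsCusco.lowerSemicontinuous_sInf (hF : IsCusco F) :
    LowerSemicontinuous fun x => sInf (valuesAt F x) := by
  intro x c hc
  obtain ⟨U, hU, hxU, hUc⟩ := hF.1 x (Ioi c) isOpen_Ioi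
    fun y hy => hc.trans_le (csInf_le (hF.2 x).2.1.bddBelow hy)
  filter_upwards [hU.mem_nhds hxU] with u hu using hUc u hu (hF.sInf_mem u)

lemma IsCusco.upperSemicontinuous_sSup (hF : IsCusco F) :
    UpperSemicontinuous fun x => sSup (valuesAt F x) := by
  intro x c hc
  obtain ⟨U, hU, hxU, hUc⟩ := hF.1 x (Iio c) isOpen_Iio
    fun y hy => (le_csSup (hF.2 x).2.1.bddAbove hy).trans_lt hc
  filter_upwards [hU.mem_nhds hxU] with u hu using hUc u hu (hF.sSup_mem u)

def boxNbhd (W F : Set (X × ℝ)) : Set (X × ℝ) :=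
  {p | ∃ U V, IsOpen U ∧ IsOpen V ∧ Convex ℝ V ∧ U ×ˢ V ⊆ W ∧
    (∀ u ∈ U, valuesAt F u ⊆ V) ∧ p ∈ U ×ˢ V}

variable {W : Set (X × ℝ)}

lemma isOpen_boxNbhd : IsOpen (boxNbhd W F) :=
  isOpen_iff_forall_mem_open.2 fun _ ⟨U, V, hU, hV, hVc, hW, hF, hp⟩ =>
    ⟨U ×ˢ V, fun _ hq => ⟨U, V, hU, hV, hVc, hW, hF, hq⟩, hU.prod hV, hp⟩

lemma boxNbhd_subset : boxNbhd W F ⊆ W := fun _ ⟨_, _, _, _, _, hW, _, hp⟩ => hW hp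

lemma IsCusco.subset_boxNbhd (hF : IsCusco F) (hW : IsOpen W) (hFW : F ⊆ W) :
    F ⊆ boxNbhd W F := by
  rintro ⟨x, y⟩ hxy
  obtain ⟨-, hcpt, hconv⟩ := hF.2 x
  obtain ⟨U₁, V₁, hU₁, hV₁, hxU₁, hFV₁, hUV₁⟩ := generalized_tube_lemma isCompact_singleton hcpt hW
    (by rintro ⟨x', y'⟩ ⟨rfl, hy'⟩; exact hFW hy')
  obtain ⟨δ, hδ, hδV₁⟩ := hcpt.exists_thickening_subset_open hV₁ hFV₁
  obtain ⟨U₂, hU₂, hxU₂, hU₂F⟩ := hF.1 x _ Metric.isOpen_thickening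
    (Metric.self_subset_thickening hδ _)
  exact ⟨U₁ ∩ U₂, _, hU₁.inter hU₂, Metric.isOpen_thickening, hconv.thickening δ,
    (prod_mono inter_subset_left hδV₁).trans hUV₁, fun u hu => hU₂F u hu.2,
    ⟨hxU₁ rfl, hxU₂⟩, Metric.self_subset_thickening hδ _ hxy⟩

lemma IsCusco.convex_valuesAt_boxNbhd (hF : IsCusco F) (x : X) :
    Convex ℝ (valuesAt (boxNbhd W F) x) := by
  refine OrdConnected.convex ⟨fun y₁ hy₁ y₂ hy₂ y hy => ?_⟩
  obtain ⟨U₁, V₁, hU₁, hV₁, hV₁c, hW₁, hF₁, hxU₁, hyV₁⟩ := hy₁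
  obtain ⟨U₂, V₂, hU₂, hV₂, hV₂c, hW₂, hF₂, hxU₂, hyV₂⟩ := hy₂
  obtain ⟨c, hc⟩ := (hF.2 x).1
  rcases le_total y c with hyc | hcy
  · exact ⟨U₁, V₁, hU₁, hV₁, hV₁c, hW₁, hF₁, hxU₁,
      hV₁c.ordConnected.out hyV₁ (hF₁ x hxU₁ hc) ⟨hy.1, hyc⟩⟩
  · exact ⟨U₂, V₂, hU₂, hV₂, hV₂c, hW₂, hF₂, hxU₂,
      hV₂c.ordConnected.out (hF₂ x hxU₂ hc) hyV₂ ⟨hcy, hy.2⟩⟩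

lemma IsMinimalCusco.subsingleton_valuesAt (hF : IsMinimalCusco F) {x₀ : X}
    (hx₀ : IsOpen ({x₀} : Set X)) : (valuesAt F x₀).Subsingleton := by
  intro y₁ hy₁ y₂ hy₂
  set G := {p ∈ F | p.1 = x₀ → p.2 = y₁}
  have hGF : ∀ x, valuesAt G x ⊆ valuesAt F x := fun _ _ hy => hy.1
  have hGx₀ : valuesAt G x₀ = {y₁} :=
    Subset.antisymm (fun y hy => hy.2 rfl) (by rintro _ rfl; exact ⟨hy₁, fun _ => rfl⟩)
  have hGx : ∀ x ≠ x₀, valuesAt G x = valuesAt F x :=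
    fun x hx => Subset.antisymm (hGF x) fun y hy => ⟨hy, fun h => (hx h).elim⟩
  have hG : IsCusco G := by
    refine ⟨fun x V hV hxV => ?_, fun x => ?_⟩
    · by_cases hx : x = x₀
      · subst hx
        exact ⟨{x}, hx₀, rfl, by rintro u rfl; exact hxV⟩
      · obtain ⟨U, hU, hxU, hUV⟩ := hF.1.1 x V hV (hGx x hx ▸ hxV)
        exact ⟨U, hU, hxU, fun u hu => (hGF u).trans (hUV u hu)⟩
    · by_cases hx : x = x₀
      · rw [hx, hGx₀]
        exact ⟨singleton_nonempty _, isCompact_singleton, convex_singleton _⟩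
      · rw [hGx x hx]
        exact hF.1.2 x
  have hy₂G : y₂ ∈ valuesAt G x₀ := (hF.2 G hG (sep_subset _ _)).symm ▸ hy₂
  exact (hy₂G.2 rfl).symm

lemma isCusco_graphOf {f : X → ℝ} (hf : Continuous f) : IsCusco (graphOf f) :=
  ⟨fun x V hV hxV => ⟨f ⁻¹' V, hV.preimage hf, hxV rfl, fun u hu => by
      rw [valuesAt_graphOf]; exact singleton_subset_iff.2 hu⟩,
    fun x => by
      rw [valuesAt_graphOf]; exact ⟨singleton_nonempty _, isCompact_singleton, convex_singleton _⟩⟩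

lemma isMinimalCusco_graphOf {f : X → ℝ} (hf : Continuous f) : IsMinimalCusco (graphOf f) := by
  refine ⟨isCusco_graphOf hf, fun G hG hGf => Subset.antisymm hGf ?_⟩
  rintro ⟨x, y⟩ (rfl : y = f x)
  obtain ⟨z, hz⟩ := (hG.2 x).1
  exact (hGf hz : z = f x) ▸ hz

end Cusco

section Vietoris

variable {X : Type*} [TopologicalSpace X] {S : Set (Set (X × ℝ))}

lemma exists_vietoris_basic_subset {𝒪 : Set S} (h𝒪 : IsOpen[vietoris S] 𝒪) {G : S} (hG : G ∈ 𝒪) :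
    ∃ (W : Set (X × ℝ)) (𝒱 : Finset (Set (X × ℝ))), IsOpen W ∧ (G : Set (X × ℝ)) ⊆ W ∧
      (∀ V ∈ 𝒱, IsOpen V ∧ ((G : Set (X × ℝ)) ∩ V).Nonempty) ∧
      ∀ A : S, (A : Set (X × ℝ)) ⊆ W → (∀ V ∈ 𝒱, ((A : Set (X × ℝ)) ∩ V).Nonempty) → A ∈ 𝒪 := by
  classical
  induction h𝒪 with
  | basic s hs =>
    rcases hs with ⟨W, hW, rfl⟩ | ⟨V, hV, rfl⟩
    · exact ⟨W, ∅, hW, hG, by simp, fun A hA _ => hA⟩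
    · exact ⟨univ, {V}, isOpen_univ, subset_univ _, by simpa [hV] using hG,
        fun A _ hA => hA V (Finset.mem_singleton_self V)⟩
  | univ => exact ⟨univ, ∅, isOpen_univ, subset_univ _, by simp, fun _ _ _ => trivial⟩
  | inter s t _ _ ihs iht =>
    obtain ⟨W₁, 𝒱₁, hW₁, hGW₁, h𝒱₁, hs⟩ := ihs hG.1
    obtain ⟨W₂, 𝒱₂, hW₂, hGW₂, h𝒱₂, ht⟩ := iht hG.2
    refine ⟨W₁ ∩ W₂, 𝒱₁ ∪ 𝒱₂, hW₁.inter hW₂, subset_inter hGW₁ hGW₂, ?_, fun A hAW hA𝒱 => ?_⟩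
    · simp only [Finset.mem_union]
      exact fun V hV => hV.elim (h𝒱₁ V) (h𝒱₂ V)
    · exact ⟨hs A (hAW.trans inter_subset_left) fun V hV => hA𝒱 V (Finset.mem_union_left _ hV),
        ht A (hAW.trans inter_subset_right) fun V hV => hA𝒱 V (Finset.mem_union_right _ hV)⟩
  | sUnion 𝒮 _ ih =>
    obtain ⟨s, hs, hGs⟩ := hG
    obtain ⟨W, 𝒱, hW, hGW, h𝒱, hsub⟩ := ih s hs hGs
    exact ⟨W, 𝒱, hW, hGW, h𝒱, fun A hAW hA𝒱 => ⟨s, hs, hsub A hAW hA𝒱⟩⟩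

theorem dense_continuous_graphOf [T1Space X] [NormalSpace X]
    (hS : ∀ F ∈ S, IsCusco F ∧ ∀ x, IsOpen ({x} : Set X) → (valuesAt F x).Subsingleton)
    (hC : ∀ f : X → ℝ, Continuous f → graphOf f ∈ S) :
    @Dense _ (vietoris S) {F : S | ∃ f : X → ℝ, Continuous f ∧ (F : Set (X × ℝ)) = graphOf f} := by
  let _ := vietoris S
  refine dense_iff_inter_open.2 fun 𝒪 h𝒪 ⟨G, hG⟩ => ?_
  obtain ⟨W, 𝒱, hW, hGW, h𝒱, h𝒪⟩ := exists_vietoris_basic_subset h𝒪 hG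
  obtain ⟨hGc, hGx⟩ := hS G G.2
  have hGΩ := hGc.subset_boxNbhd hW hGW
  obtain ⟨f₀, hf₀, hf₀Ω⟩ := exists_continuous_graph_subset isOpen_boxNbhd
    hGc.convex_valuesAt_boxNbhd hGc.lowerSemicontinuous_sInf hGc.upperSemicontinuous_sSup
    (fun x => hGΩ (hGc.sInf_mem x)) (fun x => hGΩ (hGc.sSup_mem x))
  obtain ⟨f, hf, hfΩ, hfV⟩ := exists_continuous_graph_meets isOpen_boxNbhd
    hGc.convex_valuesAt_boxNbhd hGΩ hGx hf₀ hf₀Ω 𝒱 h𝒱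
  refine ⟨⟨graphOf f, hC f hf⟩, h𝒪 _ ?_ fun V hV => ?_, f, hf, rfl⟩
  · rintro ⟨x, y⟩ (rfl : y = f x)
    exact boxNbhd_subset (hfΩ x)
  · obtain ⟨x, hx⟩ := hfV V hV
    exact ⟨(x, f x), rfl, hx⟩

end Vietoris

/-- For normal Hausdorff `X`, the continuous functions (identified with their graphs)
are dense in `(L₀(X), τ_V)` and in `(MC(X), τ_V)`. -/
theorem continuous_dense_vietoris {X : Type*} [TopologicalSpace X] [T2Space X]
    [NormalSpace X] :
    (@Dense _ (vietoris (L0Set X))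
        {F : L0Set X | ∃ f : X → ℝ, Continuous f ∧ (F : Set (X × ℝ)) = graphOf f}) ∧
    (@Dense _ (vietoris (MCSet X))
        {F : MCSet X | ∃ f : X → ℝ, Continuous f ∧ (F : Set (X × ℝ)) = graphOf f}) := by
  constructor
  · refine dense_continuous_graphOf (fun _ hF => ⟨hF.1, fun x hx => ?_⟩) fun f hf =>
      ⟨isCusco_graphOf hf, fun x _ => ⟨f x, valuesAt_graphOf f x⟩⟩
    obtain ⟨y, hy⟩ := hF.2 x hx
    exact hy ▸ subsingleton_singleton
  · exact dense_continuous_graphOf (fun _ hF => ⟨hF.1, fun _ => hF.subsingleton_valuesAt⟩)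
      fun _ hf => isMinimalCusco_graphOf hf
end

section
/- Let X be a countably compact, perfectly normal Hausdorff space. Then the spaces L₀(X) and MC(X), each equipped with the upper Vietoris topology τ_V⁺, are first countable. -/
open Set Topology TopologicalSpace

/-! The values of a cusco map `F` on a countably compact space `X` lie in a strip `X × (-N, N)`,
and closed subsets of `X × [-N, N]` are countably compact. Perfect normality writes each open set
`{x | F x ⊆ (a, b)}` as a countable union of open sets whose closures stay inside it. As the values
are compact intervals, rational intervals `(a, b)` separate them from outside points, which gives
countably many open `Q n ⊇ F` with `⋂ n, closure (Q n) ⊆ F`. By countable compactness, the finite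
intersections of the `Q n` with the strip then form a base of `𝓝ˢ F`, and a countable base of
`𝓝ˢ F` is a countable base of neighbourhoods of `F` in the upper Vietoris topology. -/

open Filter Metric

section IsCountablyCompact

variable {E Y : Type*} [TopologicalSpace E] [TopologicalSpace Y]

theorem CountablyCompact.countablyCompactSpace (hcc : CountablyCompact E) :
    CountablyCompactSpace E :=
  ⟨isCountablyCompact_iff_countable_open_cover.2 fun U hU hcov => by
    obtain ⟨t, ht⟩ := hcc U hU (univ_subset_iff.1 hcov)
    exact ⟨t, ht.ge⟩⟩

theorem IsCountablyCompact.prod_isCompact {A : Set E} {K : Set Y} (hA : IsCountablyCompact A)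
    (hK : IsCompact K) : IsCountablyCompact (A ×ˢ K) := by
  intro f _ _ hf
  obtain ⟨a, ha, hfa⟩ := hA (f := map Prod.fst f)
    (tendsto_principal.2 (mem_of_superset (le_principal_iff.1 hf) fun _ hp => hp.1))
  have : NeBot (f ⊓ comap Prod.fst (𝓝 a)) := by
    rw [neBot_inf_comap_iff_map, inf_comm]
    exact hfa
  obtain ⟨b, hb, hgb⟩ := hK (f := map Prod.snd (f ⊓ comap Prod.fst (𝓝 a)))
    (tendsto_principal.2 (mem_inf_of_left
      (mem_of_superset (le_principal_iff.1 hf) fun _ hp => hp.2)))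
  refine ⟨(a, b), ⟨ha, hb⟩, ?_⟩
  have := neBot_inf_comap_iff_map'.2 hgb.neBot
  rw [ClusterPt, nhds_prod_eq, Filter.prod_eq_inf]
  simpa only [inf_comm, inf_left_comm, inf_assoc] using this

theorem IsCountablyCompact.exists_subset_of_antitone {C : ℕ → Set E}
    (hC₀ : IsCountablyCompact (C 0)) (hC : ∀ n, IsClosed (C n)) (hanti : Antitone C)
    {W : Set E} (hW : IsOpen W) (hCW : ⋂ n, C n ⊆ W) : ∃ n, C n ⊆ W := by
  have hcover : C 0 ⊆ ⋃ n, (C n)ᶜ ∪ W := by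
    intro p _
    by_cases hp : p ∈ W
    · exact mem_iUnion.2 ⟨0, Or.inr hp⟩
    · obtain ⟨n, hn⟩ : ∃ n, p ∉ C n := by
        by_contra! h
        exact hp (hCW (mem_iInter.2 h))
      exact mem_iUnion.2 ⟨n, Or.inl hn⟩
  obtain ⟨n, hn⟩ := hC₀.elim_directed_cover _ (fun n => (hC n).isOpen_compl.union hW) hcover
    (Monotone.directed_le fun _ _ h => union_subset_union_left _ (compl_subset_compl.2 (hanti h)))
  exact ⟨n, fun p hp => (hn (hanti (Nat.zero_le n) hp)).resolve_left (not_not_intro hp)⟩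

end IsCountablyCompact

theorem IsOpen.exists_iUnion_isOpen_closure_subset {X : Type*} [TopologicalSpace X]
    [PerfectlyNormalSpace X] {S : Set X} (hS : IsOpen S) :
    ∃ T : ℕ → Set X, (∀ m, IsOpen (T m)) ∧ (∀ m, closure (T m) ⊆ S) ∧ S ⊆ ⋃ m, T m := by
  obtain ⟨U, hUo, hU⟩ := isGδ_iff_eq_iInter_nat.1 hS.isClosed_compl.isGδ
  have hUS : ∀ n, (U n)ᶜ ⊆ S := fun n =>
    compl_subset_comm.1 (hU ▸ iInter_subset U n)
  choose T hTo hUT hTS using fun n =>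
    normal_exists_closure_subset (hUo n).isClosed_compl hS (hUS n)
  refine ⟨T, hTo, hTS, fun x hx => ?_⟩
  obtain ⟨n, hn⟩ : ∃ n, x ∉ U n := by
    by_contra! h
    exact (hU ▸ mem_iInter.2 h : x ∈ Sᶜ) hx
  exact mem_iUnion.2 ⟨n, hUT n hn⟩

theorem exists_rat_subset_Ioo_notMem_Icc {s : Set ℝ} (hne : s.Nonempty) (hs : IsCompact s)
    (hconv : Convex ℝ s) {y : ℝ} (hy : y ∉ s) :
    ∃ a b : ℚ, s ⊆ Ioo (a : ℝ) b ∧ y ∉ Icc (a : ℝ) b := by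
  have hsub : s ⊆ Icc (sInf s) (sSup s) := subset_Icc_csInf_csSup hs.bddBelow hs.bddAbove
  have hIcc : Icc (sInf s) (sSup s) ⊆ s :=
    hconv.ordConnected.out (hs.sInf_mem hne) (hs.sSup_mem hne)
  obtain hlt | hgt : y < sInf s ∨ sSup s < y := by
    by_contra! h
    exact hy (hIcc h)
  · obtain ⟨a, hya, has⟩ := exists_rat_btwn hlt
    obtain ⟨b, hb⟩ := exists_rat_gt (sSup s)
    exact ⟨a, b, fun z hz => ⟨has.trans_le (hsub hz).1, (hsub hz).2.trans_lt hb⟩,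
      fun h => hya.not_ge h.1⟩
  · obtain ⟨a, ha⟩ := exists_rat_lt (sInf s)
    obtain ⟨b, hsb, hby⟩ := exists_rat_btwn hgt
    exact ⟨a, b, fun z hz => ⟨ha.trans_le (hsub hz).1, (hsub hz).2.trans_lt hsb⟩,
      fun h => hby.not_ge h.2⟩

namespace IsCusco

variable {X : Type*} [TopologicalSpace X] {F : Set (X × ℝ)}

theorem isOpen_setOf_valuesAt_subset (hF : IsCusco F) {V : Set ℝ} (hV : IsOpen V) :
    IsOpen {x : X | valuesAt F x ⊆ V} :=
  isOpen_iff_forall_mem_open.2 fun x hx =>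
    let ⟨U, hU, hxU, hUV⟩ := hF.1 x V hV hx
    ⟨U, hUV, hU, hxU⟩

theorem exists_subset_ball [CountablyCompactSpace X] (hF : IsCusco F) :
    ∃ N : ℝ, ∀ x, valuesAt F x ⊆ ball 0 N := by
  have hcover : univ ⊆ ⋃ n : ℕ, {x : X | valuesAt F x ⊆ ball 0 n} := fun x _ => by
    obtain ⟨r, -, hr⟩ := (hF.2 x).2.1.isBounded.subset_ball_lt 0 0
    obtain ⟨n, hn⟩ := exists_nat_gt r
    exact mem_iUnion.2 ⟨n, hr.trans (ball_subset_ball hn.le)⟩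
  obtain ⟨n, hn⟩ := CountablyCompactSpace.isCountablyCompact_univ.elim_directed_cover _
    (fun n => hF.isOpen_setOf_valuesAt_subset isOpen_ball) hcover
    (Monotone.directed_le fun _ _ h _ hx => hx.trans (ball_subset_ball (Nat.cast_le.2 h)))
  exact ⟨n, fun x => hn (mem_univ x)⟩

theorem exists_seq_isOpen_valuesAt_iInter_closure_subset [PerfectlyNormalSpace X]
    (hF : IsCusco F) {V : Set ℝ} (hV : IsOpen V) :
    ∃ P : ℕ → Set (X × ℝ), (∀ m, IsOpen (P m)) ∧ (∀ m, F ⊆ P m) ∧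
      ∀ x, valuesAt F x ⊆ V → valuesAt (⋂ m, closure (P m)) x ⊆ closure V := by
  obtain ⟨T, hTo, hTS, hST⟩ :=
    (hF.isOpen_setOf_valuesAt_subset hV).exists_iUnion_isOpen_closure_subset
  refine ⟨fun m => (closure (T m))ᶜ ×ˢ univ ∪ univ ×ˢ V,
    fun m => (isClosed_closure.isOpen_compl.prod isOpen_univ).union (isOpen_univ.prod hV),
    fun m p hp => ?_, fun x hxV y hy => ?_⟩
  · by_cases hx : p.1 ∈ closure (T m)
    · exact Or.inr ⟨trivial, hTS m hx hp⟩
    · exact Or.inl ⟨hx, trivial⟩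
  · obtain ⟨m, hm⟩ := mem_iUnion.1 (hST hxV)
    have hcl : closure ((closure (T m))ᶜ ×ˢ univ ∪ univ ×ˢ V) ⊆
        (T m)ᶜ ×ˢ univ ∪ univ ×ˢ closure V :=
      closure_minimal
        (union_subset_union (prod_mono (compl_subset_compl.2 subset_closure) subset_rfl)
          (prod_mono subset_rfl subset_closure))
        (((hTo m).isClosed_compl.prod isClosed_univ).union (isClosed_univ.prod isClosed_closure))
    rcases hcl (mem_iInter.1 hy m) with h | h
    · exact absurd hm h.1
    · exact h.2

theorem exists_seq_isOpen_iInter_closure_subset [PerfectlyNormalSpace X] (hF : IsCusco F) :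
    ∃ Q : ℕ → Set (X × ℝ), (∀ n, IsOpen (Q n)) ∧ (∀ n, F ⊆ Q n) ∧ ⋂ n, closure (Q n) ⊆ F := by
  choose P hPo hFP hPcl using fun ab : ℚ × ℚ =>
    hF.exists_seq_isOpen_valuesAt_iInter_closure_subset (isOpen_Ioo (a := (ab.1 : ℝ)) (b := ab.2))
  obtain ⟨e, he⟩ := exists_surjective_nat ((ℚ × ℚ) × ℕ)
  refine ⟨fun n => P (e n).1 (e n).2, fun n => hPo _ _, fun n => hFP _ _, ?_⟩
  rintro ⟨x, y⟩ hxy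
  by_contra hy
  obtain ⟨hne, hcpt, hconv⟩ := hF.2 x
  obtain ⟨a, b, hab, hyab⟩ := exists_rat_subset_Ioo_notMem_Icc hne hcpt hconv hy
  have hy' : y ∈ valuesAt (⋂ m, closure (P (a, b) m)) x := mem_iInter.2 fun m => by
    obtain ⟨n, hn⟩ := he ((a, b), m)
    simpa [hn] using mem_iInter.1 hxy n
  exact hyab (closure_minimal Ioo_subset_Icc_self isClosed_Icc (hPcl (a, b) x hab hy'))

theorem isCountablyGenerated_nhdsSet [CountablyCompactSpace X] [PerfectlyNormalSpace X]
    (hF : IsCusco F) : (𝓝ˢ F).IsCountablyGenerated := by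
  obtain ⟨N, hN⟩ := hF.exists_subset_ball
  obtain ⟨Q, hQo, hFQ, hQF⟩ := hF.exists_seq_isOpen_iInter_closure_subset
  set O : ℕ → Set (X × ℝ) := fun n => (univ ×ˢ ball 0 N) ∩ ⋂ k ∈ Finset.range n, Q k
  have hOo : ∀ n, IsOpen (O n) := fun n =>
    (isOpen_univ.prod isOpen_ball).inter (isOpen_biInter_finset fun k _ => hQo k)
  have hFO : ∀ n, F ⊆ O n := fun n p hp =>
    ⟨⟨trivial, hN p.1 hp⟩, mem_iInter₂.2 fun k _ => hFQ k hp⟩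
  have hOanti : Antitone O := fun m n h =>
    inter_subset_inter_right _ (biInter_subset_biInter_left (Finset.range_mono h))
  have hOQ : ∀ k, O (k + 1) ⊆ Q k := fun k p hp =>
    mem_iInter₂.1 hp.2 k (Finset.self_mem_range_succ k)
  have hO₀ : IsCountablyCompact (closure (O 0)) :=
    (CountablyCompactSpace.isCountablyCompact_univ.prod_isCompact (isCompact_closedBall 0 N))
      |>.of_isClosed_subset isClosed_closure <|
      closure_minimal (inter_subset_left.trans (prod_mono subset_rfl ball_subset_closedBall))
        (isClosed_univ.prod isClosed_closedBall)
  have hOF : ⋂ n, closure (O n) ⊆ F := fun p hp =>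
    hQF (mem_iInter.2 fun k => closure_mono (hOQ k) (mem_iInter.1 hp (k + 1)))
  refine ((hasBasis_nhdsSet F).to_hasBasis (p' := fun _ => True) (fun W ⟨hW, hFW⟩ => ?_)
    fun n _ => ⟨O n, ⟨hOo n, hFO n⟩, subset_rfl⟩).isCountablyGenerated
  obtain ⟨n, hn⟩ := hO₀.exists_subset_of_antitone (fun n => isClosed_closure)
    (fun _ _ h => closure_mono (hOanti h)) hW (hOF.trans hFW)
  exact ⟨n, trivial, subset_closure.trans hn⟩

end IsCusco

theorem upperVietoris_nhds_hasBasis {X : Type*} [TopologicalSpace X] (S : Set (Set (X × ℝ)))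
    (A : S) : (@nhds S (upperVietoris S) A).HasBasis (fun W => W ∈ 𝓝ˢ (A : Set (X × ℝ)))
      fun W => {B : S | (B : Set (X × ℝ)) ⊆ W} := by
  let := upperVietoris S
  have hbasis : IsTopologicalBasis
      {U | ∃ W : Set (X × ℝ), IsOpen W ∧ U = {B : S | (B : Set (X × ℝ)) ⊆ W}} :=
    isTopologicalBasis_of_subbasis_of_finiteInter rfl
      ⟨⟨univ, isOpen_univ, by simp⟩, by
        rintro _ ⟨W₁, hW₁, rfl⟩ _ ⟨W₂, hW₂, rfl⟩
        exact ⟨W₁ ∩ W₂, hW₁.inter hW₂, by ext; simp⟩⟩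
  refine hbasis.nhds_hasBasis.to_hasBasis (fun _ ⟨⟨W, hW, hU⟩, hA⟩ => ?_) fun W hW => ?_
  · subst hU
    exact ⟨W, hW.mem_nhdsSet.2 hA, subset_rfl⟩
  · obtain ⟨U, hU, hAU, hUW⟩ := mem_nhdsSet_iff_exists.1 hW
    exact ⟨_, ⟨⟨U, hU, rfl⟩, hAU⟩, fun B hB => hB.trans hUW⟩

theorem firstCountableTopology_upperVietoris {X : Type*} [TopologicalSpace X]
    (S : Set (Set (X × ℝ))) (hS : ∀ F ∈ S, (𝓝ˢ F).IsCountablyGenerated) :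
    @FirstCountableTopology S (upperVietoris S) := by
  let := upperVietoris S
  refine ⟨fun A => ?_⟩
  have := hS A A.2
  obtain ⟨O, hO⟩ := (𝓝ˢ (A : Set (X × ℝ))).exists_antitone_basis
  exact ((upperVietoris_nhds_hasBasis S A).to_hasBasis
    (fun W hW => let ⟨n, hn⟩ := hO.mem_iff.1 hW; ⟨n, trivial, fun B hB => hB.trans hn⟩)
    fun n _ => ⟨O n, hO.mem n, subset_rfl⟩).isCountablyGenerated

theorem firstCountable_upperVietoris_general {X : Type*} [TopologicalSpace X]
    [PerfectlyNormalSpace X] (hcc : CountablyCompact X) :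
    (@FirstCountableTopology _ (upperVietoris (L0Set X))) ∧
    (@FirstCountableTopology _ (upperVietoris (MCSet X))) := by
  have := hcc.countablyCompactSpace
  exact ⟨firstCountableTopology_upperVietoris _ fun _ hF => hF.1.isCountablyGenerated_nhdsSet,
    firstCountableTopology_upperVietoris _ fun _ hF => hF.1.isCountablyGenerated_nhdsSet⟩

/-- For a countably compact, perfectly normal Hausdorff space `X`, the spaces
`(L₀(X), τ_V⁺)` and `(MC(X), τ_V⁺)` are first countable. -/
theorem firstCountable_upperVietoris {X : Type*} [TopologicalSpace X] [T2Space X]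
    [PerfectlyNormalSpace X] (hcc : CountablyCompact X) :
    (@FirstCountableTopology _ (upperVietoris (L0Set X))) ∧
    (@FirstCountableTopology _ (upperVietoris (MCSet X))) :=
  firstCountable_upperVietoris_general hcc
end

section
/- Let X be a Hausdorff topological space and let f, g : X → ℝ be continuous functions with f(x) < g(x) for all x. Let M_{f,g} = {(x,y) ∈ X × ℝ : f(x) < y < g(x)} and let cl M_{f,g} denote its closure in X × ℝ. Then in the space MC(X) with the upper Vietoris topology τ_V⁺, the closure of the set M_{f,g}⁺ = {F ∈ MC(X) : graph F ⊆ M_{f,g}} is contained in the set (cl M_{f,g})⁺ = {F ∈ MC(X) : graph F ⊆ cl M_{f,g}}. -/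
open Set Topology TopologicalSpace

lemma cusco_inter_le {X : Type*} [TopologicalSpace X] {F : Set (X × ℝ)} {g : X → ℝ}
    (hF : IsCusco F) (hg : Continuous g)
    (hne : ∀ x, (valuesAt F x ∩ Iic (g x)).Nonempty) :
    IsCusco (F ∩ {p : X × ℝ | p.2 ≤ g p.1}) := by
  have hval : ∀ u, valuesAt (F ∩ {p : X × ℝ | p.2 ≤ g p.1}) u
      = valuesAt F u ∩ Iic (g u) := fun u => rfl
  constructor
  · intro x V hV hVsub
    rw [hval] at hVsub
    by_cases hT : (valuesAt F x \ V).Nonempty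
    · have hTk : IsCompact (valuesAt F x \ V) := ((hF.2 x).2.1).diff hV
      set c := sInf (valuesAt F x \ V) with hc
      have hcT : c ∈ valuesAt F x \ V := hTk.sInf_mem hT
      have hcg : g x < c := by
        by_contra h
        exact hcT.2 (hVsub ⟨hcT.1, le_of_not_gt h⟩)
      set c' := (g x + c) / 2 with hc'
      have hsub : valuesAt F x ⊆ V ∪ Ioi c' := by
        intro y hy
        by_cases hyV : y ∈ V
        · exact Or.inl hyV
        · have : c ≤ y := csInf_le hTk.bddBelow ⟨hy, hyV⟩
          exact Or.inr (by simp only [mem_Ioi]; linarith)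
      obtain ⟨U₁, hU₁o, hxU₁, hU₁⟩ := hF.1 x (V ∪ Ioi c') (hV.union isOpen_Ioi) hsub
      refine ⟨U₁ ∩ g ⁻¹' Iio c', hU₁o.inter (isOpen_Iio.preimage hg),
        ⟨hxU₁, by simp only [mem_preimage, mem_Iio]; linarith⟩, ?_⟩
      intro u hu y hy
      rw [hval] at hy
      rcases hU₁ u hu.1 hy.1 with h | h
      · exact h
      · exfalso
        have h1 : y ≤ g u := hy.2
        have h2 : g u < c' := hu.2
        have h3 : c' < y := h
        linarith
    · have hFV : valuesAt F x ⊆ V := by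
        intro y hy
        by_contra h
        exact hT ⟨y, hy, h⟩
      obtain ⟨U, hUo, hxU, hU⟩ := hF.1 x V hV hFV
      refine ⟨U, hUo, hxU, fun u hu y hy => ?_⟩
      rw [hval] at hy
      exact hU u hu hy.1
  · intro x
    rw [hval]
    exact ⟨hne x, ((hF.2 x).2.1).inter_right isClosed_Iic,
      ((hF.2 x).2.2).inter (convex_Iic _)⟩

lemma cusco_inter_ge {X : Type*} [TopologicalSpace X] {F : Set (X × ℝ)} {f : X → ℝ}
    (hF : IsCusco F) (hf : Continuous f)
    (hne : ∀ x, (valuesAt F x ∩ Ici (f x)).Nonempty) :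
    IsCusco (F ∩ {p : X × ℝ | f p.1 ≤ p.2}) := by
  have hval : ∀ u, valuesAt (F ∩ {p : X × ℝ | f p.1 ≤ p.2}) u
      = valuesAt F u ∩ Ici (f u) := fun u => rfl
  constructor
  · intro x V hV hVsub
    rw [hval] at hVsub
    by_cases hT : (valuesAt F x \ V).Nonempty
    · have hTk : IsCompact (valuesAt F x \ V) := ((hF.2 x).2.1).diff hV
      set c := sSup (valuesAt F x \ V) with hc
      have hcT : c ∈ valuesAt F x \ V := hTk.sSup_mem hT
      have hcg : c < f x := by
        by_contra h
        exact hcT.2 (hVsub ⟨hcT.1, le_of_not_gt h⟩)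
      set c' := (c + f x) / 2 with hc'
      have hsub : valuesAt F x ⊆ V ∪ Iio c' := by
        intro y hy
        by_cases hyV : y ∈ V
        · exact Or.inl hyV
        · have : y ≤ c := le_csSup hTk.bddAbove ⟨hy, hyV⟩
          exact Or.inr (by simp only [mem_Iio]; linarith)
      obtain ⟨U₁, hU₁o, hxU₁, hU₁⟩ := hF.1 x (V ∪ Iio c') (hV.union isOpen_Iio) hsub
      refine ⟨U₁ ∩ f ⁻¹' Ioi c', hU₁o.inter (isOpen_Ioi.preimage hf),
        ⟨hxU₁, by simp only [mem_preimage, mem_Ioi]; linarith⟩, ?_⟩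
      intro u hu y hy
      rw [hval] at hy
      rcases hU₁ u hu.1 hy.1 with h | h
      · exact h
      · exfalso
        have h1 : f u ≤ y := hy.2
        have h2 : c' < f u := hu.2
        have h3 : y < c' := h
        linarith
    · have hFV : valuesAt F x ⊆ V := by
        intro y hy
        by_contra h
        exact hT ⟨y, hy, h⟩
      obtain ⟨U, hUo, hxU, hU⟩ := hF.1 x V hV hFV
      refine ⟨U, hUo, hxU, fun u hu y hy => ?_⟩
      rw [hval] at hy
      exact hU u hu hy.1
  · intro x
    rw [hval]
    exact ⟨hne x, ((hF.2 x).2.1).inter_right isClosed_Ici,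
      ((hF.2 x).2.2).inter (convex_Ici _)⟩

/-- Let `f < g` be continuous real functions on a Hausdorff space `X` and let
`M_{f,g} = {(x,y) | f x < y < g x}`. In `(MC(X), τ_V⁺)`, the closure of
`M_{f,g}⁺` is contained in `(cl M_{f,g})⁺`. -/
theorem closure_Mfg_subset {X : Type*} [TopologicalSpace X] [T2Space X]
    (f g : X → ℝ) (hf : Continuous f) (hg : Continuous g) (hfg : ∀ x, f x < g x) :
    @closure _ (upperVietoris (MCSet X))
        {F : MCSet X | (F : Set (X × ℝ)) ⊆ {p : X × ℝ | f p.1 < p.2 ∧ p.2 < g p.1}} ⊆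
      {F : MCSet X |
        (F : Set (X × ℝ)) ⊆ closure {p : X × ℝ | f p.1 < p.2 ∧ p.2 < g p.1}} := by
  intro F hFcl
  set M : Set (X × ℝ) := {p : X × ℝ | f p.1 < p.2 ∧ p.2 < g p.1} with hM
  have hFmin : IsMinimalCusco (F : Set (X × ℝ)) := F.2
  -- From closure membership: every open W ⊇ F contains a cusco submap of M.
  have key : ∀ W : Set (X × ℝ), IsOpen W → (F : Set (X × ℝ)) ⊆ W →
      ∃ A : Set (X × ℝ), IsCusco A ∧ A ⊆ M ∧ A ⊆ W := by
    intro W hW hFW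
    letI : TopologicalSpace (MCSet X) := upperVietoris (MCSet X)
    have hO : IsOpen {A : MCSet X | (A : Set (X × ℝ)) ⊆ W} :=
      TopologicalSpace.GenerateOpen.basic _ ⟨W, hW, rfl⟩
    have hmemO : F ∈ {A : MCSet X | (A : Set (X × ℝ)) ⊆ W} := hFW
    obtain ⟨A, hAW, hAM⟩ := mem_closure_iff.mp hFcl _ hO hmemO
    exact ⟨A, (A.2 : IsMinimalCusco (A : Set (X × ℝ))).1, hAM, hAW⟩
  -- Every fiber of F meets (-∞, g x].
  have hgstep : ∀ x, (valuesAt (F : Set (X × ℝ)) x ∩ Iic (g x)).Nonempty := by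
    intro x
    by_contra h
    have hW : IsOpen (({x} ×ˢ Iic (g x) : Set (X × ℝ))ᶜ) :=
      (isClosed_singleton.prod isClosed_Iic).isOpen_compl
    have hFW : (F : Set (X × ℝ)) ⊆ ({x} ×ˢ Iic (g x))ᶜ := by
      intro p hp hpmem
      rcases hpmem with ⟨hp1, hp2⟩
      apply h
      refine ⟨p.2, ?_, hp2⟩
      have : (x, p.2) = p := by
        rw [show x = p.1 from hp1.symm]
      rw [valuesAt, mem_setOf_eq, this]
      exact hp
    obtain ⟨A, hA, hAM, hAW⟩ := key _ hW hFW
    obtain ⟨y, hy⟩ := (hA.2 x).1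
    have hyM : f x < y ∧ y < g x := hAM hy
    exact hAW hy (mk_mem_prod rfl hyM.2.le)
  -- Every fiber of F meets [f x, ∞).
  have hfstep : ∀ x, (valuesAt (F : Set (X × ℝ)) x ∩ Ici (f x)).Nonempty := by
    intro x
    by_contra h
    have hW : IsOpen (({x} ×ˢ Ici (f x) : Set (X × ℝ))ᶜ) :=
      (isClosed_singleton.prod isClosed_Ici).isOpen_compl
    have hFW : (F : Set (X × ℝ)) ⊆ ({x} ×ˢ Ici (f x))ᶜ := by
      intro p hp hpmem
      rcases hpmem with ⟨hp1, hp2⟩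
      apply h
      refine ⟨p.2, ?_, hp2⟩
      have : (x, p.2) = p := by
        rw [show x = p.1 from hp1.symm]
      rw [valuesAt, mem_setOf_eq, this]
      exact hp
    obtain ⟨A, hA, hAM, hAW⟩ := key _ hW hFW
    obtain ⟨y, hy⟩ := (hA.2 x).1
    have hyM : f x < y ∧ y < g x := hAM hy
    exact hAW hy (mk_mem_prod rfl hyM.1.le)
  -- By minimality, F lies below g and above f.
  have hle : ((F : Set (X × ℝ)) ∩ {p : X × ℝ | p.2 ≤ g p.1}) = (F : Set (X × ℝ)) :=
    hFmin.2 _ (cusco_inter_le hFmin.1 hg hgstep) inter_subset_left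
  have hge : ((F : Set (X × ℝ)) ∩ {p : X × ℝ | f p.1 ≤ p.2}) = (F : Set (X × ℝ)) :=
    hFmin.2 _ (cusco_inter_ge hFmin.1 hf hfstep) inter_subset_left
  -- Conclude: F ⊆ {f ≤ y ≤ g} ⊆ closure M.
  intro p hp
  have hpg : p.2 ≤ g p.1 := by
    have hp' := hp
    rw [← hle] at hp'
    exact hp'.2
  have hpf : f p.1 ≤ p.2 := by
    have hp' := hp
    rw [← hge] at hp'
    exact hp'.2
  obtain ⟨x, y⟩ := p
  simp only at hpg hpf
  set m : ℝ := (f x + g x) / 2 with hm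
  have hq : Filter.Tendsto (fun n : ℕ => ((x, y + (m - y) * (1 / (n + 1))) : X × ℝ))
      Filter.atTop (nhds (x, y)) := by
    apply Filter.Tendsto.prodMk_nhds tendsto_const_nhds
    have h0 : Filter.Tendsto (fun n : ℕ => (m - y) * (1 / ((n : ℝ) + 1)))
        Filter.atTop (nhds 0) := by
      have := tendsto_one_div_add_atTop_nhds_zero_nat.const_mul (m - y)
      simpa using this
    have := (tendsto_const_nhds : Filter.Tendsto (fun _ : ℕ => y) Filter.atTop (nhds y)).add h0
    simpa using this
  have hmem : ∀ n : ℕ, ((x, y + (m - y) * (1 / (n + 1))) : X × ℝ) ∈ M := by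
    intro n
    have ht0 : (0 : ℝ) < 1 / ((n : ℝ) + 1) := by positivity
    have ht1 : 1 / ((n : ℝ) + 1) ≤ 1 := by
      rw [div_le_one (by positivity)]
      have : (0 : ℝ) ≤ (n : ℝ) := Nat.cast_nonneg n
      linarith
    have hfgx := hfg x
    constructor
    · show f x < y + (m - y) * (1 / ((n : ℝ) + 1))
      nlinarith [mul_nonneg (sub_nonneg.mpr ht1) (sub_nonneg.mpr hpf),
        mul_pos ht0 (show (0 : ℝ) < g x - f x by linarith)]
    · show y + (m - y) * (1 / ((n : ℝ) + 1)) < g x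
      nlinarith [mul_nonneg (sub_nonneg.mpr ht1) (sub_nonneg.mpr hpg),
        mul_pos ht0 (show (0 : ℝ) < g x - f x by linarith)]
  exact mem_closure_of_tendsto hq (Filter.Eventually.of_forall hmem)
end
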